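/- arXiv:2306.01994 — 5 statements merged into one kernel-verified Lean document; each statement's English description precedes it below -/
import Mathlib

section
/- Let R = k[x_1,...,x_n] and let I(Δ) be the facet ideal of a simplicial forest Δ with good leaf ordering F_1,...,F_r of its facets, and let m_r be the monomial product of the variables in F_r. Then for all s ≥ 1, the colon ideal I(Δ)^{s+1} : m_r equals I(Δ)^s. -/
open MvPolynomial

section Aux

variable {k : Type} [Field k] {σ : Type} [DecidableEq σ]

/-- Product of variables over a finset as a monomial. -/
lemma aux_prod_X (S : Finset σ) :
    (∏ v ∈ S, (X v : MvPolynomial σ k)) =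
      monomial (∑ v ∈ S, Finsupp.single v 1) 1 := by
  rw [monomial_sum_one]
  refine Finset.prod_congr rfl fun v _ => ?_
  rw [← X_pow_eq_monomial, pow_one]

lemma aux_e_apply (S : Finset σ) (w : σ) :
    (∑ v ∈ S, Finsupp.single v (1 : ℕ)) w = if w ∈ S then 1 else 0 := by
  classical
  rw [Finset.sum_apply']
  rw [Finset.sum_congr rfl (fun v _ => Finsupp.single_apply)]
  simp [Finset.sum_ite_eq' S w (fun _ => (1 : ℕ))]

/-- Powers of a monomial ideal `span (range (monomial (e i) 1))` are spanned by monomials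
whose exponents are sums of `n` of the `e i`. -/
lemma aux_span_pow {r : ℕ} (e : Fin r → (σ →₀ ℕ)) (n : ℕ) :
    (Ideal.span (Set.range fun i => (monomial (e i) (1 : k)))) ^ n =
      Ideal.span ((fun d => monomial d (1 : k)) ''
        {d | ∃ g : Fin n → Fin r, d = ∑ j, e (g j)}) := by
  induction n with
  | zero =>
      have hset : {d : σ →₀ ℕ | ∃ g : Fin 0 → Fin r, d = ∑ j, e (g j)} = {0} := by
        ext d
        constructor
        · rintro ⟨g, rfl⟩; simp
        · rintro rfl; exact ⟨Fin.elim0, by simp⟩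
      rw [hset]
      simp [Ideal.one_eq_top, Ideal.span_singleton_eq_top]
  | succ n ih =>
      rw [pow_succ, ih, Ideal.span_mul_span']
      congr 1
      ext x
      constructor
      · rintro ⟨a, ⟨d, ⟨g, rfl⟩, rfl⟩, b, ⟨i, rfl⟩, rfl⟩
        refine ⟨(∑ j, e (g j)) + e i, ⟨Fin.snoc g i, ?_⟩, ?_⟩
        · rw [Fin.sum_univ_castSucc]
          simp [Fin.snoc_castSucc, Fin.snoc_last]
        · simp [monomial_mul]
      · rintro ⟨d, ⟨g, rfl⟩, rfl⟩
        refine ⟨monomial (∑ j : Fin n, e (g j.castSucc)) 1,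
          ⟨∑ j : Fin n, e (g j.castSucc), ⟨fun j => g j.castSucc, rfl⟩, rfl⟩,
          monomial (e (g (Fin.last n))) 1, ⟨g (Fin.last n), rfl⟩, ?_⟩
        show monomial (∑ j : Fin n, e (g j.castSucc)) (1:k) * monomial (e (g (Fin.last n))) 1 = _
        rw [monomial_mul, one_mul, Fin.sum_univ_castSucc]

/-- The core combinatorial lemma: if a sum of `s+1` facet indicator vectors is dominated by
`χ + e ρ` where `ρ` is the last (good leaf) facet, then some sum of `s` of them is
dominated by `χ`. -/
lemma aux_core {r s : ℕ} (F : Fin r → Finset σ) (ρ : Fin r)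
    (hρmax : ∀ i : Fin r, i ≤ ρ)
    (hgood : ∀ j l : Fin r, j < ρ → l < ρ →
      (F j ∩ F ρ ⊆ F l ∩ F ρ ∨ F l ∩ F ρ ⊆ F j ∩ F ρ))
    (e : Fin r → (σ →₀ ℕ)) (he : ∀ i v, e i v = if v ∈ F i then 1 else 0)
    (g : Fin (s + 1) → Fin r) (χ : σ →₀ ℕ)
    (hle : ∑ j, e (g j) ≤ χ + e ρ) :
    ∃ g' : Fin s → Fin r, ∑ j, e (g' j) ≤ χ := by
  classical
  -- choose a distinguished index j* such that any `v ∈ F ρ` lying in some `F (g j)`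
  -- lies in `F (g j*)`.
  obtain ⟨js, hjs⟩ : ∃ js : Fin (s + 1),
      ∀ v ∈ F ρ, (∃ j, v ∈ F (g j)) → v ∈ F (g js) := by
    by_cases hexρ : ∃ j0, g j0 = ρ
    · obtain ⟨j0, hj0⟩ := hexρ
      exact ⟨j0, fun v hv _ => hj0 ▸ hv⟩
    · push_neg at hexρ
      have hlt : ∀ j, g j < ρ := fun j => lt_of_le_of_ne (hρmax _) (hexρ j)
      obtain ⟨js, hjsmax⟩ := Finite.exists_max fun j => (F (g j) ∩ F ρ).card
      refine ⟨js, fun v hv hex => ?_⟩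
      obtain ⟨j, hj⟩ := hex
      have hsub : F (g j) ∩ F ρ ⊆ F (g js) ∩ F ρ := by
        rcases hgood (g j) (g js) (hlt j) (hlt js) with h | h
        · exact h
        · exact le_of_eq (Finset.eq_of_subset_of_card_le h (hjsmax j)).symm
      exact Finset.mem_inter.mp (hsub (Finset.mem_inter.mpr ⟨hj, hv⟩)) |>.1
  refine ⟨fun j => g (js.succAbove j), ?_⟩
  have hsum : ∑ j, e (g j) = e (g js) + ∑ j : Fin s, e (g (js.succAbove j)) :=
    Fin.sum_univ_succAbove (fun j => e (g j)) js
  rw [Finsupp.le_def]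
  intro v
  have htot : (∑ j, e (g j)) v ≤ χ v + (e ρ) v := by
    have := Finsupp.le_def.mp hle v
    simpa using this
  rw [hsum] at htot
  simp only [Finsupp.add_apply, Finsupp.coe_finset_sum, Finset.sum_apply] at htot ⊢
  by_cases hvρ : v ∈ F ρ
  · by_cases hvex : ∃ j, v ∈ F (g j)
    · have hjsv : v ∈ F (g js) := hjs v hvρ hvex
      have h1 : e (g js) v = 1 := by rw [he]; simp [hjsv]
      have h2 : e ρ v = 1 := by rw [he]; simp [hvρ]
      omega
    · push_neg at hvex
      have : ∀ j : Fin s, e (g (js.succAbove j)) v = 0 := fun j => by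
        rw [he]; simp [hvex _]
      simp [this]
  · have h2 : e ρ v = 0 := by rw [he]; simp [hvρ]
    omega

end Aux

/-- Lemma 4.1(1): for a simplicial forest with a good leaf ordering `F_1, ..., F_r`,
`I(Δ)^{s+1} : m_r = I(Δ)^s` for all `s ≥ 1`. -/
theorem powers_colon_last_good_leaf
    {k σ : Type} [Field k] [Fintype σ] [DecidableEq σ] {r : ℕ} (hr : 0 < r)
    (F : Fin r → Finset σ)
    (hne : ∀ i, (F i).Nonempty)
    (hfacet : ∀ i j, i ≠ j → ¬ F i ⊆ F j)
    (hgoodleaf : ∀ i j l : Fin r, j < i → l < i →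
      (F j ∩ F i ⊆ F l ∩ F i ∨ F l ∩ F i ⊆ F j ∩ F i))
    (m : Fin r → MvPolynomial σ k)
    (hm : ∀ i, m i = ∏ v ∈ F i, X v)
    (s : ℕ) (hs : 1 ≤ s) :
    Submodule.colon ((Ideal.span (Set.range m)) ^ (s + 1))
        (Ideal.span {m ⟨r - 1, by omega⟩}) =
      (Ideal.span (Set.range m)) ^ s := by
  classical
  set ρ : Fin r := ⟨r - 1, by omega⟩ with hρdef
  set e : Fin r → (σ →₀ ℕ) := fun i => ∑ v ∈ F i, Finsupp.single v 1 with hedef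
  have he : ∀ i v, e i v = if v ∈ F i then 1 else 0 := fun i v => aux_e_apply (F i) v
  have hm' : ∀ i, m i = monomial (e i) 1 := fun i => by rw [hm i, aux_prod_X]
  have hrange : Set.range m = Set.range fun i => (monomial (e i) (1 : k)) := by
    have hmeq : m = fun i => monomial (e i) (1 : k) := funext hm'
    rw [hmeq]
  have hρmax : ∀ i : Fin r, i ≤ ρ := fun i => by
    have := i.isLt; exact Fin.le_def.mpr (by simp [hρdef]; omega)
  have hpow : ∀ n : ℕ, (Ideal.span (Set.range m)) ^ n =
      Ideal.span ((fun d => monomial d (1 : k)) ''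
        {d | ∃ g : Fin n → Fin r, d = ∑ j, e (g j)}) := fun n => by
    rw [hrange, aux_span_pow]
  apply le_antisymm
  · -- hard direction
    intro x hx
    have hmem := Submodule.mem_colon.mp hx (m ρ) (Ideal.subset_span rfl)
    have hmem' : x * monomial (e ρ) 1 ∈ (Ideal.span (Set.range m)) ^ (s + 1) := by
      rw [← hm' ρ]
      simpa [smul_eq_mul] using hmem
    rw [hpow (s + 1)] at hmem'
    rw [hpow s]
    rw [mem_ideal_span_monomial_image] at hmem' ⊢
    intro χ hχ
    have hχ' : χ + e ρ ∈ (x * monomial (e ρ) 1).support := by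
      rw [mem_support_iff, coeff_mul_monomial, mul_one]
      exact mem_support_iff.mp hχ
    obtain ⟨d, ⟨g, rfl⟩, hd⟩ := hmem' _ hχ'
    obtain ⟨g', hg'⟩ := aux_core F ρ hρmax
      (fun j l hj hl => hgoodleaf ρ j l hj hl) e he g χ hd
    exact ⟨∑ j, e (g' j), ⟨g', rfl⟩, hg'⟩
  · -- easy direction
    intro x hx
    rw [Submodule.mem_colon]
    intro p hp
    obtain ⟨c, rfl⟩ := Ideal.mem_span_singleton'.mp hp
    have hmρ : m ρ ∈ Ideal.span (Set.range m) := Ideal.subset_span ⟨ρ, rfl⟩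
    have : x * (c * m ρ) = c * (x * m ρ) := by ring
    rw [smul_eq_mul, this]
    refine Ideal.mul_mem_left _ c ?_
    rw [pow_succ]
    exact Ideal.mul_mem_mul hx hmρ
end

section
/- Let Δ be a simplicial forest with good leaf ordering F_1,...,F_r, let m_i be the monomial of facet F_i, let Δ_i = ⟨F_1,...,F_i⟩ and J_i = (m_{i+1},...,m_r). Then for all s ≥ 1 and all 1 ≤ i ≤ r−1, (I(Δ_i)^{s+1} + J_i) : m_i = I(Δ_i)^s + (J_i : m_i). -/
/-!
All ideals involved are monomial ideals, so the identity reduces to a statement about exponent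
vectors. Since `F_i` is a good leaf of `Δ_i`, the traces `F_j ∩ F_i` (`j ≤ i`) form a chain. If
`m_{j_0} ⋯ m_{j_s}` divides `u m_i`, pick `j_0` with the largest trace: every other `F_{j_l}` meets
`F_i` inside `F_{j_0}`, so `m_i` can be cancelled against `m_{j_0}` alone and `m_{j_1} ⋯ m_{j_s}`
divides `u`. This gives `I(Δ_i)^{s+1} : m_i = I(Δ_i)^s`, and colons by a monomial commute with
sums of monomial ideals.
-/

open MvPolynomial
open scoped Pointwise

namespace MvPolynomial

section MonomialIdeal

variable {σ k : Type*} [CommSemiring k]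

variable (k) in
noncomputable def monomialIdeal (S : Set (σ →₀ ℕ)) : Ideal (MvPolynomial σ k) :=
  Ideal.span ((fun d => monomial d 1) '' S)

theorem monomialIdeal_le_monomialIdeal {S T : Set (σ →₀ ℕ)} (h : ∀ c ∈ S, ∃ d ∈ T, d ≤ c) :
    monomialIdeal k S ≤ monomialIdeal k T := by
  rw [monomialIdeal, Ideal.span_le]
  rintro _ ⟨c, hc, rfl⟩
  refine mem_ideal_span_monomial_image.2 fun c' hc' => ?_
  rw [Finset.mem_singleton.1 (support_monomial_subset hc')]
  exact h c hc

theorem monomialIdeal_union (S T : Set (σ →₀ ℕ)) :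
    monomialIdeal k (S ∪ T) = monomialIdeal k S ⊔ monomialIdeal k T := by
  rw [monomialIdeal, Set.image_union, Ideal.span_union]
  rfl

theorem image_monomial_one_add (A B : Set (σ →₀ ℕ)) :
    (fun d => monomial d (1 : k)) '' (A + B) =
      (fun d => monomial d (1 : k)) '' A * (fun d => monomial d (1 : k)) '' B := by
  rw [← Set.image2_add, ← Set.image2_mul]
  exact Set.image_image2_distrib (g := fun d => monomial d (1 : k)) fun a b => by
    simp only [monomial_mul, one_mul]

theorem monomialIdeal_pow (S : Set (σ →₀ ℕ)) (n : ℕ) :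
    monomialIdeal k S ^ n = monomialIdeal k (n • S) := by
  induction n with
  | zero => simp [monomialIdeal, Ideal.one_eq_top]
  | succ n ih =>
    rw [pow_succ, ih, monomialIdeal, monomialIdeal, Ideal.span_mul_span', succ_nsmul, monomialIdeal,
      image_monomial_one_add]

theorem colon_monomialIdeal (S : Set (σ →₀ ℕ)) (a : σ →₀ ℕ) :
    (monomialIdeal k S).colon (Ideal.span {monomial a (1 : k)}) =
      monomialIdeal k ((· - a) '' S) := by
  ext f
  simp only [Ideal.mem_colon_span_singleton, monomialIdeal, mem_ideal_span_monomial_image,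
    Set.exists_mem_image]
  constructor
  · intro h c hc
    have hca : c + a ∈ (f * monomial a 1).support := by
      rwa [mem_support_iff, coeff_mul_monomial, mul_one, ← mem_support_iff]
    obtain ⟨d, hd, hle⟩ := h (c + a) hca
    exact ⟨d, hd, tsub_le_iff_right.2 hle⟩
  · intro h c hc
    rw [mem_support_iff, coeff_mul_monomial', mul_one] at hc
    split_ifs at hc with hac
    · obtain ⟨d, hd, hle⟩ := h (c - a) (mem_support_iff.2 hc)
      exact ⟨d, hd, (tsub_le_iff_right.1 hle).trans_eq (tsub_add_cancel_of_le hac)⟩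
    · exact absurd rfl hc

theorem colon_monomialIdeal_sup (S T : Set (σ →₀ ℕ)) (a : σ →₀ ℕ) :
    (monomialIdeal k S ⊔ monomialIdeal k T).colon (Ideal.span {monomial a (1 : k)}) =
      (monomialIdeal k S).colon (Ideal.span {monomial a (1 : k)}) ⊔
        (monomialIdeal k T).colon (Ideal.span {monomial a (1 : k)}) := by
  rw [← monomialIdeal_union, colon_monomialIdeal, colon_monomialIdeal, colon_monomialIdeal,
    Set.image_union, monomialIdeal_union]

end MonomialIdeal

section SquarefreeExponent

variable {σ : Type*}

noncomputable def squarefreeExponent (t : Finset σ) : σ →₀ ℕ :=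
  ∑ v ∈ t, Finsupp.single v 1

theorem prod_X_eq_monomial_squarefreeExponent {k : Type*} [CommSemiring k] (t : Finset σ) :
    ∏ v ∈ t, (X v : MvPolynomial σ k) = monomial (squarefreeExponent t) 1 :=
  (monomial_sum_one t _).symm

theorem squarefreeExponent_apply_of_mem {t : Finset σ} {v : σ} (hv : v ∈ t) :
    squarefreeExponent t v = 1 := by
  classical
  simp [squarefreeExponent, Finsupp.finsetSum_apply, Finsupp.single_apply, hv]

theorem squarefreeExponent_apply_of_notMem {t : Finset σ} {v : σ} (hv : v ∉ t) :
    squarefreeExponent t v = 0 := by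
  classical
  simp [squarefreeExponent, Finsupp.finsetSum_apply, Finsupp.single_apply, hv]

variable [DecidableEq σ] {S : Set (Finset σ)} {A : Finset σ}

/-- `G` is a factor whose trace on `A` is largest; it exists because the traces form a chain. -/
theorem exists_eq_add_squarefreeExponent_of_mem_succ_nsmul
    (hS : IsChain (· ⊆ ·) ((· ∩ A) '' S)) {n : ℕ} {d : σ →₀ ℕ}
    (hd : d ∈ (n + 1) • (squarefreeExponent '' S)) :
    ∃ t ∈ n • (squarefreeExponent '' S), ∃ G ∈ S,
      d = t + squarefreeExponent G ∧ ∀ v ∈ A, v ∉ G → t v = 0 := by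
  induction n generalizing d with
  | zero =>
    rw [zero_add, one_nsmul] at hd
    obtain ⟨G, hG, rfl⟩ := hd
    exact ⟨0, by rw [zero_nsmul]; rfl, G, hG, (zero_add _).symm, fun _ _ _ => rfl⟩
  | succ n ih =>
    rw [succ_nsmul] at hd
    obtain ⟨d', hd', _, ⟨H, hH, rfl⟩, rfl⟩ := Set.mem_add.1 hd
    obtain ⟨t, ht, G, hG, rfl, htG⟩ := ih hd'
    rcases hS.total ⟨G, hG, rfl⟩ ⟨H, hH, rfl⟩ with hGH | hHG
    · refine ⟨t + squarefreeExponent G, by rw [succ_nsmul]; exact Set.add_mem_add ht ⟨G, hG, rfl⟩,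
        H, hH, rfl, fun v hvA hvH => ?_⟩
      have hvG : v ∉ G := fun hvG =>
        hvH (Finset.mem_of_mem_inter_left (hGH (Finset.mem_inter_of_mem hvG hvA)))
      rw [Finsupp.add_apply, htG v hvA hvG, squarefreeExponent_apply_of_notMem hvG]
    · refine ⟨t + squarefreeExponent H, by rw [succ_nsmul]; exact Set.add_mem_add ht ⟨H, hH, rfl⟩,
        G, hG, add_right_comm _ _ _, fun v hvA hvG => ?_⟩
      have hvH : v ∉ H := fun hvH =>
        hvG (Finset.mem_of_mem_inter_left (hHG (Finset.mem_inter_of_mem hvH hvA)))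
      rw [Finsupp.add_apply, htG v hvA hvG, squarefreeExponent_apply_of_notMem hvH]

theorem exists_le_tsub_squarefreeExponent_of_mem_succ_nsmul
    (hS : IsChain (· ⊆ ·) ((· ∩ A) '' S)) {n : ℕ} {d : σ →₀ ℕ}
    (hd : d ∈ (n + 1) • (squarefreeExponent '' S)) :
    ∃ t ∈ n • (squarefreeExponent '' S), t ≤ d - squarefreeExponent A := by
  obtain ⟨t, ht, G, -, rfl, htG⟩ := exists_eq_add_squarefreeExponent_of_mem_succ_nsmul hS hd
  refine ⟨t, ht, Finsupp.le_def.2 fun v => ?_⟩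
  rw [Finsupp.tsub_apply, Finsupp.add_apply]
  by_cases hvA : v ∈ A
  · by_cases hvG : v ∈ G
    · rw [squarefreeExponent_apply_of_mem hvG, squarefreeExponent_apply_of_mem hvA,
        Nat.add_sub_cancel]
    · rw [htG v hvA hvG]
      exact Nat.zero_le _
  · rw [squarefreeExponent_apply_of_notMem hvA, Nat.sub_zero]
    exact Nat.le_add_right _ _

theorem colon_monomialIdeal_succ_nsmul_squarefreeExponent {k : Type*} [CommSemiring k]
    (hS : IsChain (· ⊆ ·) ((· ∩ A) '' S)) (hA : A ∈ S) (n : ℕ) :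
    (monomialIdeal k ((n + 1) • (squarefreeExponent '' S))).colon
        (Ideal.span {monomial (squarefreeExponent A) (1 : k)}) =
      monomialIdeal k (n • (squarefreeExponent '' S)) := by
  rw [colon_monomialIdeal]
  refine le_antisymm (monomialIdeal_le_monomialIdeal ?_) (monomialIdeal_le_monomialIdeal ?_)
  · rintro _ ⟨d, hd, rfl⟩
    exact exists_le_tsub_squarefreeExponent_of_mem_succ_nsmul hS hd
  · intro t ht
    refine ⟨t + squarefreeExponent A - squarefreeExponent A, ⟨t + squarefreeExponent A, ?_, rfl⟩,
      by rw [add_tsub_cancel_right]⟩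
    rw [succ_nsmul]
    exact Set.add_mem_add ht ⟨A, hA, rfl⟩

end SquarefreeExponent

end MvPolynomial

theorem truncated_powers_colon_general
    {k σ : Type} [Field k] [DecidableEq σ] {r : ℕ}
    (F : Fin r → Finset σ)
    (hgoodleaf : ∀ i j l : Fin r, j < i → l < i →
      (F j ∩ F i ⊆ F l ∩ F i ∨ F l ∩ F i ⊆ F j ∩ F i))
    (m : Fin r → MvPolynomial σ k)
    (hm : ∀ i, m i = ∏ v ∈ F i, X v)
    (s : ℕ)
    (i : Fin r) :
    Submodule.colon
        ((Ideal.span {p | ∃ j : Fin r, j ≤ i ∧ p = m j}) ^ (s + 1) +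
          Ideal.span {p | ∃ j : Fin r, i < j ∧ p = m j})
        (Ideal.span {m i}) =
      (Ideal.span {p | ∃ j : Fin r, j ≤ i ∧ p = m j}) ^ s +
        Submodule.colon (Ideal.span {p | ∃ j : Fin r, i < j ∧ p = m j})
          (Ideal.span {m i}) := by
  have hspan : ∀ P : Fin r → Prop, Ideal.span {p | ∃ j, P j ∧ p = m j} =
      monomialIdeal k (squarefreeExponent '' (F '' {j | P j})) := by
    intro P
    simp only [monomialIdeal, Set.image_image, hm, prod_X_eq_monomial_squarefreeExponent]
    congr 1
    ext p
    simp [eq_comm]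
  have hchain : IsChain (· ⊆ ·) ((· ∩ F i) '' (F '' {j | j ≤ i})) := by
    rintro _ ⟨_, ⟨j, hj, rfl⟩, rfl⟩ _ ⟨_, ⟨l, hl, rfl⟩, rfl⟩ -
    rcases (Set.mem_ofPred.1 hj).lt_or_eq with hj | rfl
    · rcases (Set.mem_ofPred.1 hl).lt_or_eq with hl | rfl
      · exact hgoodleaf i j l hj hl
      · exact Or.inl (by simp)
    · exact Or.inr (by simp)
  rw [hspan (· ≤ i), hspan (i < ·), hm i, prod_X_eq_monomial_squarefreeExponent,
    monomialIdeal_pow, monomialIdeal_pow, Submodule.add_eq_sup, Submodule.add_eq_sup,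
    colon_monomialIdeal_sup,
    colon_monomialIdeal_succ_nsmul_squarefreeExponent hchain ⟨i, le_refl i, rfl⟩]

/-- Lemma 4.1(2): with `Δ_i = ⟨F_1,...,F_i⟩` and `J_i = (m_{i+1},...,m_r)`, for all
`s ≥ 1` and all `i` with `1 ≤ i ≤ r - 1`,
`(I(Δ_i)^{s+1} + J_i) : m_i = I(Δ_i)^s + (J_i : m_i)`. -/
theorem truncated_powers_colon
    {k σ : Type} [Field k] [Fintype σ] [DecidableEq σ] {r : ℕ}
    (F : Fin r → Finset σ)
    (hne : ∀ i, (F i).Nonempty)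
    (hfacet : ∀ i j, i ≠ j → ¬ F i ⊆ F j)
    (hgoodleaf : ∀ i j l : Fin r, j < i → l < i →
      (F j ∩ F i ⊆ F l ∩ F i ∨ F l ∩ F i ⊆ F j ∩ F i))
    (m : Fin r → MvPolynomial σ k)
    (hm : ∀ i, m i = ∏ v ∈ F i, X v)
    (s : ℕ) (hs : 1 ≤ s)
    (i : Fin r) (hi : i.val + 1 < r) :
    Submodule.colon
        ((Ideal.span {p | ∃ j : Fin r, j ≤ i ∧ p = m j}) ^ (s + 1) +
          Ideal.span {p | ∃ j : Fin r, i < j ∧ p = m j})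
        (Ideal.span {m i}) =
      (Ideal.span {p | ∃ j : Fin r, j ≤ i ∧ p = m j}) ^ s +
        Submodule.colon (Ideal.span {p | ∃ j : Fin r, i < j ∧ p = m j})
          (Ideal.span {m i}) :=
  truncated_powers_colon_general F hgoodleaf m hm s i
end

section
/- Let (Γ, x_0) be a rooted tree and x a leaf of Γ whose level is strictly less than t − 1. Then I_t(Γ \ {x}) and I_t(Γ) have the same minimal monomial generators, and hence reg(R/I_t(Γ \ {x})) = reg(R/I_t(Γ)). -/
open MvPolynomial

structure MinFreeRes (k σ : Type) [Field k] (I : Ideal (MvPolynomial σ k)) where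
  b : ℕ → ℕ
  deg : (i : ℕ) → Fin (b i) → ℕ
  d : (i : ℕ) → ((Fin (b (i + 1)) → MvPolynomial σ k) →ₗ[MvPolynomial σ k]
        (Fin (b i) → MvPolynomial σ k))
  aug : (Fin (b 0) → MvPolynomial σ k) →ₗ[MvPolynomial σ k] (MvPolynomial σ k ⧸ I)
  aug_surjective : Function.Surjective aug
  exact_zero : Function.Exact (d 0) aug
  exact_succ : ∀ i : ℕ, Function.Exact (d (i + 1)) (d i)
  aug_homog : ∀ j : Fin (b 0), ∃ p : MvPolynomial σ k,
      p.IsHomogeneous (deg 0 j) ∧ aug (Pi.single j 1) = Ideal.Quotient.mk I p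
  d_homog : ∀ (i : ℕ) (j : Fin (b (i + 1))) (l : Fin (b i)),
      (d i (Pi.single j 1) l).IsHomogeneous (deg (i + 1) j - deg i l) ∧
        (deg (i + 1) j < deg i l → d i (Pi.single j 1) l = 0)
  minimal : ∀ (i : ℕ) (j : Fin (b (i + 1))) (l : Fin (b i)),
      MvPolynomial.constantCoeff (d i (Pi.single j 1) l) = 0

/-- The Castelnuovo-Mumford regularity of the module `R/I`, defined as the supremum of
`j - i` over the nonzero graded Betti numbers `β_{i,j}(R/I)`, read off from (any)
minimal graded free resolution of `R/I`. -/
noncomputable def reg (k σ : Type) [Field k] (I : Ideal (MvPolynomial σ k)) : ℤ :=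
  sSup {x : ℤ | ∃ F : MinFreeRes k σ I, ∃ i : ℕ, ∃ j : Fin (F.b i), x = (F.deg i j : ℤ) - i}

/-- A rooted tree on the vertex set `V`, encoded by the parent function (every edge is
directed away from the root). -/
structure RTree (V : Type) where
  root : V
  parent : V → V
  parent_root : parent root = root
  reach : ∀ v : V, ∃ n : ℕ, parent^[n] v = root

namespace RTree

variable {V : Type} [Fintype V] [DecidableEq V]

/-- The level of a vertex: its distance from the root. -/
noncomputable def level (T : RTree V) (v : V) : ℕ := Nat.find (T.reach v)

/-- The height of the rooted tree: the maximal level of a vertex. -/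
noncomputable def height (T : RTree V) : ℕ := Finset.univ.sup fun v => T.level v

/-- The outdegree of a vertex: its number of children. -/
noncomputable def outdeg (T : RTree V) (x : V) : ℕ :=
  Nat.card {y : V // T.parent y = x ∧ y ≠ T.root}

/-- A leaf is a vertex with no children. -/
def IsLeaf (T : RTree V) (x : V) : Prop := ∀ y : V, T.parent y = x → y = T.root

/-- A rooted tree is perfect if every leaf has level equal to the height. -/
def Perfect (T : RTree V) : Prop := ∀ x : V, T.IsLeaf x → T.level x = T.height

/-- The monomial of the directed path on `t` vertices ending at `v`
(valid when `level v ≥ t - 1`). -/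
noncomputable def pathMonomial (T : RTree V) (k : Type) [Field k] (t : ℕ) (v : V) :
    MvPolynomial V k := ∏ j ∈ Finset.range t, MvPolynomial.X (T.parent^[j] v)

/-- The `t`-path ideal `I_t(Γ)`: generated by the monomials of directed paths on
`t` vertices. -/
noncomputable def pathIdeal (T : RTree V) (k : Type) [Field k] (t : ℕ) :
    Ideal (MvPolynomial V k) :=
  Ideal.span {m | ∃ v : V, t ≤ T.level v + 1 ∧ m = T.pathMonomial k t v}

end RTree

/-- Remark 3.5: if `x` is a leaf of `Γ` whose level is strictly less than `t - 1`, then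
`I_t(Γ \ {x})` and `I_t(Γ)` have the same (minimal monomial) generators, and hence
`reg(R/I_t(Γ \ {x})) = reg(R/I_t(Γ))`. -/
theorem path_ideal_remove_low_leaf
    {k V : Type} [Field k] [Fintype V] [DecidableEq V] (T : RTree V)
    (t : ℕ) (x : V) (hx : T.IsLeaf x) (hlevel : T.level x + 1 < t) :
    ({m | ∃ v : V, t ≤ T.level v + 1 ∧ (∀ j, j < t → T.parent^[j] v ≠ x) ∧
        m = T.pathMonomial k t v} : Set (MvPolynomial V k)) =
      {m | ∃ v : V, t ≤ T.level v + 1 ∧ m = T.pathMonomial k t v} ∧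
    reg k V (Ideal.span {m | ∃ v : V, t ≤ T.level v + 1 ∧
        (∀ j, j < t → T.parent^[j] v ≠ x) ∧ m = T.pathMonomial k t v}) =
      reg k V (T.pathIdeal k t) := by
  have hset : ({m | ∃ v : V, t ≤ T.level v + 1 ∧ (∀ j, j < t → T.parent^[j] v ≠ x) ∧
      m = T.pathMonomial k t v} : Set (MvPolynomial V k)) =
      {m | ∃ v : V, t ≤ T.level v + 1 ∧ m = T.pathMonomial k t v} := by
    ext m
    constructor
    · rintro ⟨v, h1, _, h3⟩; exact ⟨v, h1, h3⟩
    · rintro ⟨v, h1, h3⟩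
      refine ⟨v, h1, ?_, h3⟩
      intro j hj hje
      cases j with
      | zero =>
        simp only [Function.iterate_zero, id] at hje
        subst hje
        omega
      | succ n =>
        rw [Function.iterate_succ_apply'] at hje
        have hroot := hx _ hje
        have hlv : T.level v ≤ n := Nat.find_min' (T.reach v) hroot
        omega
  refine ⟨hset, ?_⟩
  rw [hset, RTree.pathIdeal]
end

section
/- Let (Γ, x_0) be a perfect rooted tree of height h ≥ 1 and t = h. Then I_t(Γ) : x_0 = I_{t−1}(Γ \ ({x_0} ∪ {z : ℓ(z) = h})), i.e., the colon of the h-path ideal by the root equals the (h−1)-path ideal of the forest obtained by deleting the root and all vertices at the top level. -/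
/-!
The colon of a monomial ideal by the variable `x₀` is generated by the generators with `x₀`
divided out. A directed path on `h` vertices ends at level `h - 1` or `h`. In the first case
it passes through the root, and dividing out `x₀` leaves a path on `h - 1` vertices ending at
level `h - 1`; in the second case it avoids the root and is a multiple of such a path, the one
ending at the parent of its last vertex. Conversely every path on `h - 1` vertices avoiding the
root and the top level ends at level `h - 1`.
-/

open MvPolynomial

theorem Finsupp.le_of_le_add_single {ι : Type*} {s d : ι →₀ ℕ} {i : ι} {n : ℕ} (hs : s i = 0)
    (h : s ≤ d + Finsupp.single i n) : s ≤ d := by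
  intro x
  by_cases hx : x = i
  · subst hx
    simp [hs]
  · simpa [Finsupp.single_apply, Ne.symm hx] using h x

namespace MvPolynomial

variable {σ R : Type*} [CommSemiring R]

theorem colon_span_X_of_span_monomial {S S' : Set (σ →₀ ℕ)} (i : σ)
    (h : ∀ d, (∃ s ∈ S, s ≤ d + Finsupp.single i 1) ↔ ∃ s ∈ S', s ≤ d) :
    (Ideal.span ((fun s => monomial s (1 : R)) '' S)).colon
        (Ideal.span {(X i : MvPolynomial σ R)}) =
      Ideal.span ((fun s => monomial s (1 : R)) '' S') := by
  ext f
  rw [Ideal.mem_colon_span_singleton, mem_ideal_span_monomial_image,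
    mem_ideal_span_monomial_image, support_mul_X, Finset.forall_mem_map]
  exact forall₂_congr fun d _ => h d

end MvPolynomial

namespace RTree

variable {V : Type} (T : RTree V)

theorem parent_iterate_root (n : ℕ) : T.parent^[n] T.root = T.root :=
  Function.iterate_fixed T.parent_root n

noncomputable def pathExp (t : ℕ) (v : V) : V →₀ ℕ :=
  ∑ j ∈ Finset.range t, Finsupp.single (T.parent^[j] v) 1

@[simp]
theorem pathExp_zero (v : V) : T.pathExp 0 v = 0 :=
  Finset.sum_range_zero _

theorem pathExp_succ (t : ℕ) (v : V) :
    T.pathExp (t + 1) v = T.pathExp t v + Finsupp.single (T.parent^[t] v) 1 :=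
  Finset.sum_range_succ _ _

theorem pathExp_succ_eq_single_add (t : ℕ) (v : V) :
    T.pathExp (t + 1) v = Finsupp.single v 1 + T.pathExp t (T.parent v) := by
  simp only [pathExp, Finset.sum_range_succ', Function.iterate_succ_apply,
    Function.iterate_zero_apply, add_comm]

theorem pathMonomial_eq_monomial (k : Type) [Field k] (t : ℕ) (v : V) :
    T.pathMonomial k t v = monomial (T.pathExp t v) (1 : k) := by
  induction t with
  | zero => simp [pathMonomial]
  | succ t ih =>
    rw [pathMonomial, Finset.prod_range_succ, ← pathMonomial, ih, T.pathExp_succ, X,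
      monomial_mul, one_mul]

theorem setOf_pathMonomial_eq_image (k : Type) [Field k] (t : ℕ) (P : V → Prop) :
    {m | ∃ v, P v ∧ m = T.pathMonomial k t v} =
      (fun s => monomial s (1 : k)) '' (T.pathExp t '' {v | P v}) := by
  ext m
  simp [Set.image_image, pathMonomial_eq_monomial, eq_comm]

section Level

variable [DecidableEq V]

theorem parent_iterate_level (v : V) : T.parent^[T.level v] v = T.root :=
  Nat.find_spec (T.reach v)

theorem parent_iterate_ne_root {v : V} {j : ℕ} (h : j < T.level v) :
    T.parent^[j] v ≠ T.root :=
  Nat.find_min (T.reach v) h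

@[simp]
theorem level_root : T.level T.root = 0 :=
  (Nat.find_eq_zero _).mpr rfl

theorem level_parent_iterate {v : V} {j : ℕ} (h : j ≤ T.level v) :
    T.level (T.parent^[j] v) = T.level v - j := by
  refine (Nat.find_eq_iff _).mpr ⟨?_, fun n hn => ?_⟩
  · rw [← Function.iterate_add_apply, Nat.sub_add_cancel h, T.parent_iterate_level]
  · rw [← Function.iterate_add_apply]
    exact T.parent_iterate_ne_root (by omega)

theorem pathExp_apply_root {t : ℕ} {v : V} (h : t ≤ T.level v) : T.pathExp t v T.root = 0 := by
  rw [pathExp, Finset.sum_apply']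
  refine Finset.sum_eq_zero fun j hj => Finsupp.single_eq_of_ne' (T.parent_iterate_ne_root ?_)
  exact (Finset.mem_range.mp hj).trans_le h

theorem pathExp_level_succ (v : V) :
    T.pathExp (T.level v + 1) v = T.pathExp (T.level v) v + Finsupp.single T.root 1 := by
  rw [pathExp_succ, parent_iterate_level]

end Level

section Height

variable [Fintype V] [DecidableEq V] {t : ℕ}

theorem level_le_height (v : V) : T.level v ≤ T.height :=
  Finset.le_sup (Finset.mem_univ v)

theorem exists_pathExp_succ_le_add_single_root_iff (ht : T.height = t + 1) (d : V →₀ ℕ) :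
    (∃ v, t ≤ T.level v ∧ T.pathExp (t + 1) v ≤ d + Finsupp.single T.root 1) ↔
      ∃ v, T.level v = t ∧ T.pathExp t v ≤ d := by
  constructor
  · rintro ⟨v, htv, hle⟩
    rcases (T.level_le_height v).trans_eq ht |>.lt_or_eq with hlt | htop
    · have hv : T.level v = t := by omega
      rw [← hv, pathExp_level_succ] at hle
      exact ⟨v, hv, le_of_add_le_add_right (hv ▸ hle)⟩
    · refine ⟨T.parent v, by simpa [htop] using T.level_parent_iterate (v := v) (j := 1) (by omega), ?_⟩
      calc T.pathExp t (T.parent v) ≤ T.pathExp (t + 1) v := by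
            rw [pathExp_succ_eq_single_add]; exact le_add_self
        _ ≤ d := Finsupp.le_of_le_add_single (T.pathExp_apply_root (by omega)) hle
  · rintro ⟨v, rfl, hle⟩
    exact ⟨v, le_rfl, by rw [pathExp_level_succ]; exact add_le_add_left hle _⟩

theorem level_eq_of_forall_parent_iterate (ht : T.height = t + 1) (hpos : 0 < t) {v : V}
    (hv : ∀ j, j < t → T.parent^[j] v ≠ T.root ∧ T.level (T.parent^[j] v) ≠ t + 1) :
    T.level v = t := by
  have hlow : t ≤ T.level v := by
    by_contra! hlt
    exact (hv _ hlt).1 (T.parent_iterate_level v)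
  have htop : T.level v ≠ t + 1 := (hv 0 hpos).2
  have := ht ▸ T.level_le_height v
  omega

theorem exists_forall_parent_iterate_iff (ht : T.height = t + 1) (d : V →₀ ℕ) :
    (∃ v, (∀ j, j < t → T.parent^[j] v ≠ T.root ∧ T.level (T.parent^[j] v) ≠ t + 1) ∧
        T.pathExp t v ≤ d) ↔
      ∃ v, T.level v = t ∧ T.pathExp t v ≤ d := by
  constructor
  · rintro ⟨v, hv, hle⟩
    rcases Nat.eq_zero_or_pos t with rfl | hpos
    · exact ⟨T.root, T.level_root, by simp⟩
    · exact ⟨v, T.level_eq_of_forall_parent_iterate ht hpos hv, hle⟩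
  · rintro ⟨v, rfl, hle⟩
    refine ⟨v, fun j hj => ⟨T.parent_iterate_ne_root hj, ?_⟩, hle⟩
    rw [T.level_parent_iterate hj.le]
    omega

end Height

end RTree

theorem path_ideal_height_colon_root_general
    {k V : Type} [Field k] [Fintype V] [DecidableEq V] (T : RTree V)
    (hh : 1 ≤ T.height) :
    Submodule.colon (T.pathIdeal k T.height)
        (Ideal.span {(X T.root : MvPolynomial V k)}) =
      Ideal.span {m | ∃ v : V, (∀ j, j < T.height - 1 →
          T.parent^[j] v ≠ T.root ∧ T.level (T.parent^[j] v) ≠ T.height) ∧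
        m = T.pathMonomial k (T.height - 1) v} := by
  obtain ⟨t, ht⟩ : ∃ t, T.height = t + 1 := ⟨_, (Nat.succ_pred_eq_of_pos hh).symm⟩
  rw [RTree.pathIdeal, T.setOf_pathMonomial_eq_image, T.setOf_pathMonomial_eq_image, ht,
    Nat.add_sub_cancel]
  refine colon_span_X_of_span_monomial _ fun d => ?_
  simp only [Set.exists_mem_image, Set.mem_ofPred_eq, add_le_add_iff_right]
  rw [T.exists_pathExp_succ_le_add_single_root_iff ht, T.exists_forall_parent_iterate_iff ht]

/-- For a perfect rooted tree of height `h ≥ 1` and `t = h`,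
`I_t(Γ) : x_0 = I_{t-1}(Γ \ ({x_0} ∪ {z : ℓ(z) = h}))`: the colon of the `h`-path ideal
by the root variable equals the `(h-1)`-path ideal of the forest obtained by deleting the
root and all vertices at the top level. -/
theorem path_ideal_height_colon_root
    {k V : Type} [Field k] [Fintype V] [DecidableEq V] (T : RTree V)
    (hh : 1 ≤ T.height) (hperf : T.Perfect) :
    Submodule.colon (T.pathIdeal k T.height)
        (Ideal.span {(X T.root : MvPolynomial V k)}) =
      Ideal.span {m | ∃ v : V, (∀ j, j < T.height - 1 →
          T.parent^[j] v ≠ T.root ∧ T.level (T.parent^[j] v) ≠ T.height) ∧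
        m = T.pathMonomial k (T.height - 1) v} :=
  path_ideal_height_colon_root_general T hh
end

section
/- Let Δ be a simplicial tree with the intersection property, with the facet ordering F_1,...,F_r as in the good-leaf/distance-1 ordering. If a vertex x belongs to F_j \ F_i for some j < i, then x ∉ F_k for all k ≥ i. -/
/-- Lemma 2.2(a): let `Δ` be a simplicial tree satisfying the intersection property,
with facets ordered as in the good-leaf/distance-1 ordering of Lemma 2.1 (a good leaf
ordering with `|F_i ∩ F_{i+1}| = |F_{i+1}| - 1` for all `i`). If a vertex `x` belongs to
`F_j \ F_i` for some `j < i`, then `x ∉ F_k` for all `k ≥ i`. -/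
theorem vertex_vanishes_after
    {σ : Type} [DecidableEq σ] {r : ℕ}
    (F : Fin r → Finset σ)
    (hne : ∀ i, (F i).Nonempty)
    (hfacet : ∀ i j, i ≠ j → ¬ F i ⊆ F j)
    (hgoodleaf : ∀ i j l : Fin r, j < i → l < i →
      (F j ∩ F i ⊆ F l ∩ F i ∨ F l ∩ F i ⊆ F j ∩ F i))
    (hdist : ∀ i : Fin r, ∀ hi : i.val + 1 < r,
      (F i ∩ F ⟨i.val + 1, hi⟩).card + 1 = (F ⟨i.val + 1, hi⟩).card)
    (hpure : ∀ i j : Fin r, (F i).card = (F j).card)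
    (i j : Fin r) (hji : j < i) (x : σ) (hxj : x ∈ F j) (hxi : x ∉ F i) :
    ∀ l : Fin r, i ≤ l → x ∉ F l := by
  have key : ∀ m : ℕ, i.val ≤ m → ∀ h : m < r, x ∉ F ⟨m, h⟩ := by
    intro m him
    induction m, him using Nat.le_induction with
    | base =>
      intro h
      have : (⟨i.val, h⟩ : Fin r) = i := Fin.ext rfl
      rw [this]; exact hxi
    | succ n hn ih =>
      intro h hx
      have hn' : n < r := Nat.lt_of_succ_lt h
      have hj : j < (⟨n+1, h⟩ : Fin r) := by
        have := hji
        simp only [Fin.lt_def] at this ⊢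
        omega
      have hl : (⟨n, hn'⟩ : Fin r) < (⟨n+1, h⟩ : Fin r) := by
        simp [Fin.lt_def]
      rcases hgoodleaf ⟨n+1, h⟩ j ⟨n, hn'⟩ hj hl with hc | hc
      · exact ih hn' (Finset.mem_inter.mp (hc (Finset.mem_inter.mpr ⟨hxj, hx⟩))).1
      · have hcard : (F ⟨n, hn'⟩ ∩ F ⟨n+1, h⟩).card + 1 = (F ⟨n+1, h⟩).card := hdist ⟨n, hn'⟩ h
        have hsub : F j ∩ F ⟨n+1, h⟩ ⊆ F ⟨n+1, h⟩ := Finset.inter_subset_right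
        have hne' : F j ∩ F ⟨n+1, h⟩ ≠ F ⟨n+1, h⟩ := by
          intro heq
          refine hfacet ⟨n+1, h⟩ j (Ne.symm (Fin.ne_of_lt hj)) ?_
          intro a ha
          have : a ∈ F j ∩ F ⟨n+1, h⟩ := heq.symm ▸ ha
          exact (Finset.mem_inter.mp this).1
        have hlt : (F j ∩ F ⟨n+1, h⟩).card < (F ⟨n+1, h⟩).card :=
          Finset.card_lt_card (HasSubset.Subset.ssubset_of_ne hsub hne')
        have hle : (F j ∩ F ⟨n+1, h⟩).card ≤ (F ⟨n, hn'⟩ ∩ F ⟨n+1, h⟩).card := by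
          omega
        have heq := Finset.eq_of_subset_of_card_le hc hle
        have : x ∈ F ⟨n, hn'⟩ ∩ F ⟨n+1, h⟩ := by
          rw [heq]; exact Finset.mem_inter.mpr ⟨hxj, hx⟩
        exact ih hn' (Finset.mem_inter.mp this).1
  intro l hl
  have : (⟨l.val, l.isLt⟩ : Fin r) = l := Fin.ext rfl
  exact this ▸ key l.val hl l.isLt
end
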